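/- For all real constants C > 0 and γ > 2 there exists a constant K > 0 (depending only on C and γ) such that the following holds: for every finite simple undirected connected graph G=(V,E) with |V| ≥ 2 and diameter Δ, and every ρ ∈ (0,1], if |{v ∈ V : d(v) = k}| ≤ C·|V|/k^γ for every positive integer k, then there exists a seed set S ⊆ V with |S| ≤ K·⌈ρ^{γ−1}·|V|⌉ such that S ⊆ Active^{(1)}(S,G,ρ) and Active^{(Δ)}(S,G,ρ) = V. -/

import Mathlib

/-!
Seed every vertex of degree at least `1/ρ` together with `⌈ρ d(v)⌉` of its neighbours, and the
two ends of one edge `ab`. Every other seed has a seeded neighbour, and one active neighbour is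
enough for a vertex of degree below `1/ρ`; so the seeds stay active, and activity spreads from `a`
along shortest paths, reaching all of `V` within `Δ` rounds. There are at most
`2 + 3ρ ∑_{d(v) ≥ 1/ρ} d(v)` seeds, and the degree bound gives
`∑_{d(v) ≥ 1/ρ} d(v) ≤ C n ∑_{k ≥ 1/ρ} k^{1-γ} = O(ρ^{γ-2} n)` because `γ > 2`.
-/

/-- One round of the synchronous reversible cascade on an undirected graph:
`ractive G ρ S k` is the set of active vertices in round `k`, starting from seed set `S`. -/
def ractive {V : Type*} (G : SimpleGraph V) (ρ : ℝ) (S : Set V) : ℕ → Set V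
  | 0 => S
  | k + 1 =>
      {v | 0 < (G.neighborSet v).ncard ∧
        ρ * (G.neighborSet v).ncard ≤ ((G.neighborSet v ∩ ractive G ρ S k).ncard : ℝ)} ∪
      {v | v ∈ S ∧ (G.neighborSet v).ncard = 0}

/-- `minSeed G ρ k` is the minimum number of seeds activating all vertices in round `k`. -/
noncomputable def minSeed {V : Type*} (G : SimpleGraph V) (ρ : ℝ) (k : ℕ) : ℕ :=
  sInf {m | ∃ S : Set V, S.ncard = m ∧ ractive G ρ S k = Set.univ}

open Finset

section Cascade

variable {V : Type*} (G : SimpleGraph V) (ρ : ℝ) (S : Set V)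

lemma mem_ractive_succ_of_adj {k : ℕ} {v w : V} (hpos : 0 < (G.neighborSet v).ncard)
    (hlow : ρ * (G.neighborSet v).ncard ≤ 1) (hvw : G.Adj v w) (hw : w ∈ ractive G ρ S k) :
    v ∈ ractive G ρ S (k + 1) := by
  refine Or.inl ⟨hpos, hlow.trans ?_⟩
  have hfin := (Set.finite_of_ncard_pos hpos).subset (Set.inter_subset_left (t := ractive G ρ S k))
  exact_mod_cast (Set.ncard_pos hfin).mpr ⟨w, hvw, hw⟩

lemma monotone_ractive (hS : S ⊆ ractive G ρ S 1) : Monotone (ractive G ρ S) := by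
  refine monotone_nat_of_le_succ fun k => ?_
  induction k with
  | zero => exact hS
  | succ k ih =>
    rintro v (⟨hpos, hv⟩ | hv)
    · refine Or.inl ⟨hpos, hv.trans ?_⟩
      have hfin := (Set.finite_of_ncard_pos hpos).subset
        (Set.inter_subset_left (t := ractive G ρ S (k + 1)))
      exact_mod_cast Set.ncard_le_ncard (Set.inter_subset_inter_right _ ih) hfin
    · exact Or.inr hv

lemma mem_ractive_length_of_walk (hS : S ⊆ ractive G ρ S 1)
    (hlow : ∀ v ∉ S, 0 < (G.neighborSet v).ncard ∧ ρ * (G.neighborSet v).ncard ≤ 1)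
    {v a : V} (ha : a ∈ S) (p : G.Walk v a) : v ∈ ractive G ρ S p.length := by
  induction p with
  | nil => exact ha
  | @cons v w _ hvw q ih =>
    by_cases hv : v ∈ S
    · exact monotone_ractive G ρ S hS (Nat.zero_le _) hv
    · exact mem_ractive_succ_of_adj G ρ S (hlow v hv).1 (hlow v hv).2 hvw (ih ha)

lemma ractive_diam_eq_univ [Finite V] (hconn : G.Connected) (hS : S ⊆ ractive G ρ S 1)
    (hlow : ∀ v ∉ S, 0 < (G.neighborSet v).ncard ∧ ρ * (G.neighborSet v).ncard ≤ 1)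
    {a : V} (ha : a ∈ S) : ractive G ρ S G.diam = Set.univ := by
  have : Nonempty V := hconn.nonempty
  have hdiam : G.ediam ≠ ⊤ := G.connected_iff_ediam_ne_top.mp hconn
  refine Set.eq_univ_of_forall fun v => ?_
  obtain ⟨p, hp⟩ := (hconn.preconnected v a).exists_walk_length_eq_dist
  exact monotone_ractive G ρ S hS (hp ▸ G.dist_le_diam hdiam)
    (mem_ractive_length_of_walk G ρ S hS hlow ha p)

end Cascade

section Seeds

variable {V : Type*} (G : SimpleGraph V) (ρ : ℝ)

def seedSet (a b : V) (H : Finset V) (A : V → Set V) : Set V :=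
  {a, b} ∪ ⋃ v ∈ H, insert v (A v)

lemma left_mem_seedSet (a b : V) (H : Finset V) (A : V → Set V) : a ∈ seedSet a b H A :=
  Or.inl (Or.inl rfl)

lemma insert_subset_seedSet {a b v : V} {H : Finset V} {A : V → Set V} (hv : v ∈ H) :
    insert v (A v) ⊆ seedSet a b H A :=
  fun _ hx => Or.inr (Set.mem_biUnion hv hx)

lemma ncard_seedSet_le (a b : V) (H : Finset V) (A : V → Set V) :
    (seedSet a b H A).ncard ≤ 2 + ∑ v ∈ H, (1 + (A v).ncard) := by
  have hpair : ({a, b} : Set V).ncard ≤ 2 :=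
    (Set.ncard_insert_le a {b}).trans (by rw [Set.ncard_singleton])
  calc (seedSet a b H A).ncard
      ≤ ({a, b} : Set V).ncard + (⋃ v ∈ H, insert v (A v)).ncard := Set.ncard_union_le _ _
    _ ≤ 2 + ∑ v ∈ H, (insert v (A v)).ncard := add_le_add hpair (H.set_ncard_biUnion_le _)
    _ ≤ 2 + ∑ v ∈ H, (1 + (A v).ncard) := by
      gcongr with v
      exact (Set.ncard_insert_le v (A v)).trans_eq (add_comm _ _)

lemma ncard_seedSet_le_mul_sum (a b : V) {H : Finset V}
    (hH : ∀ v ∈ H, 1 ≤ ρ * (G.neighborSet v).ncard) {A : V → Set V}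
    (hAcard : ∀ v, (A v).ncard = ⌈ρ * (G.neighborSet v).ncard⌉₊) :
    ((seedSet a b H A).ncard : ℝ) ≤ 2 + 3 * ρ * ∑ v ∈ H, ((G.neighborSet v).ncard : ℝ) := by
  have hterm : ∀ v ∈ H, ((1 + (A v).ncard : ℕ) : ℝ) ≤ 3 * (ρ * (G.neighborSet v).ncard) := by
    intro v hv
    have := Nat.ceil_lt_add_one (zero_le_one.trans (hH v hv))
    push_cast [hAcard]
    linarith [hH v hv]
  calc ((seedSet a b H A).ncard : ℝ) ≤ 2 + ∑ v ∈ H, ((1 + (A v).ncard : ℕ) : ℝ) := by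
        exact_mod_cast ncard_seedSet_le a b H A
    _ ≤ 2 + 3 * ρ * ∑ v ∈ H, ((G.neighborSet v).ncard : ℝ) := by
        rw [mul_assoc, mul_sum, mul_sum]
        gcongr with v hv
        exact hterm v hv

lemma seedSet_subset_ractive_one {a b : V} (hab : G.Adj a b) {H : Finset V}
    (hH : ∀ v, 1 ≤ ρ * (G.neighborSet v).ncard → v ∈ H)
    (hpos : ∀ v, 0 < (G.neighborSet v).ncard) {A : V → Set V}
    (hA : ∀ v, A v ⊆ G.neighborSet v) (hAcard : ∀ v, ρ * (G.neighborSet v).ncard ≤ (A v).ncard) :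
    seedSet a b H A ⊆ ractive G ρ (seedSet a b H A) 1 := by
  set S := seedSet a b H A
  have haS : a ∈ S := left_mem_seedSet a b H A
  have hbS : b ∈ S := Or.inl (Or.inr rfl)
  intro v hv
  by_cases hvH : v ∈ H
  · refine Or.inl ⟨hpos v, (hAcard v).trans ?_⟩
    have hfin := (Set.finite_of_ncard_pos (hpos v)).subset (Set.inter_subset_left (t := S))
    exact_mod_cast Set.ncard_le_ncard
      (Set.subset_inter (hA v) ((Set.subset_insert v (A v)).trans (insert_subset_seedSet hvH)))
      hfin
  have hlow : ρ * (G.neighborSet v).ncard ≤ 1 := (not_le.mp (mt (hH v) hvH)).le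
  suffices ∃ w ∈ S, G.Adj v w by
    obtain ⟨w, hwS, hvw⟩ := this
    exact mem_ractive_succ_of_adj G ρ S (hpos v) hlow hvw hwS
  rcases hv with (rfl | rfl) | hv
  · exact ⟨b, hbS, hab⟩
  · exact ⟨a, haS, hab.symm⟩
  · obtain ⟨w, hwH, rfl | hvA⟩ := Set.mem_iUnion₂.mp hv
    · exact absurd hwH hvH
    · exact ⟨w, insert_subset_seedSet hwH (Set.mem_insert w (A w)), (hA w hvA).symm⟩

end Seeds

lemma sum_Ioc_rpow_le_integral {r : ℝ} (hr : r ≤ 0) {T n : ℕ} (hT : 1 ≤ T) (hTn : T ≤ n) :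
    ∑ k ∈ Ioc T n, (k : ℝ) ^ r ≤ ∫ x in (T : ℝ)..n, x ^ r := by
  have hanti : AntitoneOn (fun x : ℝ => x ^ r) (Set.Icc (T : ℝ) n) :=
    (Real.antitoneOn_rpow_Ioi_of_exponent_nonpos hr).mono fun x hx =>
      lt_of_lt_of_le (by exact_mod_cast hT) hx.1
  convert hanti.sum_le_integral_Ico hTn using 1
  rw [sum_Ico_add' (fun k : ℕ => (k : ℝ) ^ r), Ico_add_one_right_eq_Icc, Icc_add_one_left_eq_Ioc]

lemma integral_rpow_le {γ : ℝ} (hγ : 2 < γ) {a b : ℝ} (ha : 0 < a) (hb : 0 < b) :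
    ∫ x in a..b, x ^ (1 - γ) ≤ a ^ (2 - γ) / (γ - 2) := by
  rw [integral_rpow (Or.inr ⟨by linarith, Set.notMem_uIcc_of_lt ha hb⟩),
    show 1 - γ + 1 = 2 - γ by ring, ← neg_div_neg_eq, neg_sub, neg_sub]
  gcongr
  exact sub_le_self _ (by positivity)

lemma sum_Icc_rpow_le {γ : ℝ} (hγ : 2 < γ) {T : ℕ} (hT : 1 ≤ T) (n : ℕ) :
    ∑ k ∈ Icc T n, (k : ℝ) ^ (1 - γ) ≤ (γ - 1) / (γ - 2) * (T : ℝ) ^ (2 - γ) := by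
  have hγ2 : 0 < γ - 2 := by linarith
  by_cases hTn : T ≤ n
  · have hfirst : (T : ℝ) ^ (1 - γ) ≤ (T : ℝ) ^ (2 - γ) :=
      Real.rpow_le_rpow_of_exponent_le (by exact_mod_cast hT) (by linarith)
    have htail := (sum_Ioc_rpow_le_integral (by linarith) hT hTn).trans
      (integral_rpow_le hγ (by exact_mod_cast hT) (by exact_mod_cast hT.trans hTn))
    -- The term `k = T` is kept apart: comparing it with `∫_{T-1}^T` would diverge for `T = 1`.
    rw [Icc_eq_cons_Ioc hTn, sum_cons]
    calc (T : ℝ) ^ (1 - γ) + ∑ k ∈ Ioc T n, (k : ℝ) ^ (1 - γ)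
        ≤ (T : ℝ) ^ (2 - γ) + (T : ℝ) ^ (2 - γ) / (γ - 2) := add_le_add hfirst htail
      _ = (γ - 1) / (γ - 2) * (T : ℝ) ^ (2 - γ) := by field_simp; ring
  · rw [Icc_eq_empty hTn, sum_empty]
    have : 0 < γ - 1 := by linarith
    positivity

lemma sum_le_sum_mul_ncard_fiber {V : Type*} [Finite V] (f : V → ℕ) {H : Finset V} {T n : ℕ}
    (hH : ∀ v ∈ H, f v ∈ Icc T n) :
    ∑ v ∈ H, (f v : ℝ) ≤ ∑ k ∈ Icc T n, (k : ℝ) * ({v | f v = k} : Set V).ncard := by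
  rw [← sum_fiberwise_of_maps_to hH]
  gcongr with k
  calc ∑ v ∈ H with f v = k, (f v : ℝ)
      = ∑ v ∈ H with f v = k, (k : ℝ) := sum_congr rfl fun v hv => by rw [(mem_filter.mp hv).2]
    _ = (k : ℝ) * #{v ∈ H | f v = k} := by rw [sum_const, nsmul_eq_mul, mul_comm]
    _ ≤ (k : ℝ) * ({v | f v = k} : Set V).ncard := by
      gcongr
      rw [← Set.ncard_coe_finset]
      exact Set.ncard_le_ncard (fun v hv => (mem_filter.mp hv).2)

lemma ceil_inv_rpow_le {ρ γ : ℝ} (hρ : 0 < ρ) (hγ : 2 ≤ γ) :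
    (⌈ρ⁻¹⌉₊ : ℝ) ^ (2 - γ) ≤ ρ ^ (γ - 2) := by
  calc (⌈ρ⁻¹⌉₊ : ℝ) ^ (2 - γ) ≤ ρ⁻¹ ^ (2 - γ) :=
        Real.rpow_le_rpow_of_nonpos (inv_pos.mpr hρ) (Nat.le_ceil _) (by linarith)
    _ = ρ ^ (γ - 2) := by rw [Real.inv_rpow hρ.le, ← Real.rpow_neg hρ.le, neg_sub]

lemma sum_high_degree_le {V : Type*} [Fintype V] (G : SimpleGraph V) {C γ ρ : ℝ} (hC : 0 ≤ C)
    (hγ : 2 < γ) (hρ : 0 < ρ)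
    (hdeg : ∀ k : ℕ, 0 < k → (({v : V | (G.neighborSet v).ncard = k} : Set V).ncard : ℝ) ≤
      C * Fintype.card V / (k : ℝ) ^ γ)
    {H : Finset V} (hH : ∀ v ∈ H, 1 ≤ ρ * (G.neighborSet v).ncard) :
    ∑ v ∈ H, ((G.neighborSet v).ncard : ℝ) ≤
      C * Fintype.card V * ((γ - 1) / (γ - 2) * ρ ^ (γ - 2)) := by
  set n := Fintype.card V
  set T := ⌈ρ⁻¹⌉₊
  have hT : 1 ≤ T := Nat.one_le_iff_ne_zero.mpr (by positivity)
  have hmaps : ∀ v ∈ H, (G.neighborSet v).ncard ∈ Icc T n := fun v hv =>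
    mem_Icc.mpr ⟨Nat.ceil_le.mpr ((inv_le_iff_one_le_mul₀' hρ).mpr (hH v hv)),
      (Set.ncard_le_card _).trans_eq Nat.card_eq_fintype_card⟩
  calc ∑ v ∈ H, ((G.neighborSet v).ncard : ℝ)
      ≤ ∑ k ∈ Icc T n, (k : ℝ) * ({v | (G.neighborSet v).ncard = k} : Set V).ncard :=
        sum_le_sum_mul_ncard_fiber _ hmaps
    _ ≤ ∑ k ∈ Icc T n, C * n * (k : ℝ) ^ (1 - γ) := by
      refine sum_le_sum fun k hk => ?_
      have hk0 : (0 : ℝ) < k := by exact_mod_cast hT.trans (mem_Icc.mp hk).1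
      calc (k : ℝ) * ({v | (G.neighborSet v).ncard = k} : Set V).ncard
          ≤ k * (C * n / (k : ℝ) ^ γ) := by gcongr; exact hdeg k (by exact_mod_cast hk0)
        _ = C * n * (k : ℝ) ^ (1 - γ) := by
          rw [Real.rpow_sub hk0, Real.rpow_one]; field_simp
    _ ≤ C * n * ((γ - 1) / (γ - 2) * ρ ^ (γ - 2)) := by
      rw [← mul_sum]
      gcongr
      have hγ' : 0 ≤ (γ - 1) / (γ - 2) := div_nonneg (by linarith) (by linarith)
      exact (sum_Icc_rpow_le hγ hT n).trans
        (mul_le_mul_of_nonneg_left (ceil_inv_rpow_le hρ hγ.le) hγ')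

lemma add_mul_le_mul_ceil {a c x : ℝ} (ha : 0 ≤ a) (hc : 0 ≤ c) (hx : 0 < x) :
    a + c * x ≤ (a + c) * ⌈x⌉ := by
  have h1 : (1 : ℝ) ≤ ⌈x⌉ := by exact_mod_cast Int.ceil_pos.mpr hx
  have h2 : x ≤ ⌈x⌉ := Int.le_ceil x
  nlinarith

theorem stmt_13 (C γ : ℝ) (hC : 0 < C) (hγ : 2 < γ) :
    ∃ K : ℝ, 0 < K ∧
      ∀ (V : Type) [Fintype V] (G : SimpleGraph V), G.Connected → 2 ≤ Fintype.card V →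
        ∀ ρ : ℝ, 0 < ρ → ρ ≤ 1 →
          (∀ k : ℕ, 0 < k →
            ((({v : V | (G.neighborSet v).ncard = k} : Set V).ncard : ℝ) ≤
              C * (Fintype.card V) / (k : ℝ) ^ γ)) →
          ∃ S : Set V,
            (S.ncard : ℝ) ≤ K * (⌈ρ ^ (γ - 1) * (Fintype.card V : ℝ)⌉ : ℝ) ∧
            S ⊆ ractive G ρ S 1 ∧ ractive G ρ S G.diam = Set.univ := by
  have hK : 0 ≤ 3 * C * ((γ - 1) / (γ - 2)) :=
    mul_nonneg (by positivity) (div_nonneg (by linarith) (by linarith))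
  refine ⟨2 + 3 * C * ((γ - 1) / (γ - 2)), by positivity, ?_⟩
  intro V _ G hconn hcard ρ hρ hρ1 hdeg
  classical
  have : Nontrivial V := Fintype.one_lt_card_iff_nontrivial.mp hcard
  have hpos : ∀ v, 0 < (G.neighborSet v).ncard := fun v =>
    have ⟨w, hw⟩ := hconn.preconnected.exists_adj_of_nontrivial v
    (Set.ncard_pos (Set.toFinite _)).mpr ⟨w, hw⟩
  obtain ⟨a⟩ := hconn.nonempty
  obtain ⟨b, hab⟩ := hconn.preconnected.exists_adj_of_nontrivial a
  choose A hA hAcard using fun v => Set.exists_subset_card_eq (s := G.neighborSet v)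
    (Nat.ceil_le.mpr (mul_le_of_le_one_left (Nat.cast_nonneg _) hρ1))
  set H := univ.filter fun v => 1 ≤ ρ * (G.neighborSet v).ncard
  have hH : ∀ v, v ∈ H ↔ 1 ≤ ρ * (G.neighborSet v).ncard := fun v => by simp [H]
  set S := seedSet a b H A
  have hS := seedSet_subset_ractive_one G ρ hab (fun v => (hH v).mpr) hpos hA
    fun v => (hAcard v).symm ▸ Nat.le_ceil _
  have hlow : ∀ v ∉ S, 0 < (G.neighborSet v).ncard ∧ ρ * (G.neighborSet v).ncard ≤ 1 :=
    fun v hv => ⟨hpos v, (not_le.mp fun h =>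
      hv (insert_subset_seedSet ((hH v).mpr h) (Set.mem_insert v (A v)))).le⟩
  refine ⟨S, ?_, hS, ractive_diam_eq_univ G ρ S hconn hS hlow (left_mem_seedSet a b H A)⟩
  calc (S.ncard : ℝ) ≤ 2 + 3 * ρ * ∑ v ∈ H, ((G.neighborSet v).ncard : ℝ) :=
        ncard_seedSet_le_mul_sum G ρ a b (fun v => (hH v).mp) hAcard
    _ ≤ 2 + 3 * ρ * (C * Fintype.card V * ((γ - 1) / (γ - 2) * ρ ^ (γ - 2))) := by
        gcongr
        exact sum_high_degree_le G hC.le hγ hρ hdeg fun v => (hH v).mp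
    _ = 2 + 3 * C * ((γ - 1) / (γ - 2)) * (ρ ^ (γ - 1) * Fintype.card V) := by
        rw [show γ - 1 = γ - 2 + 1 by ring, Real.rpow_add_one hρ.ne']
        ring
    _ ≤ _ := add_mul_le_mul_ceil zero_le_two hK (by positivity)
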